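/- Under the same hypotheses, the limit U = (Û, 0) of the rescaled velocities satisfies the two-dimensional constraints: div_{x̂}(∫₀^{G₁} Û(x̂, y₃) dy₃) = 0 in ω (in the distributional sense) and (∫₀^{G₁} Û(x̂, y₃) dy₃)·n = 0 on ∂ω, where n is the outward normal to ω. -/

import Mathlib

open MeasureTheory Set Filter
open scoped Classical
noncomputable section

abbrev V3 := Fin 3 → ℝ
abbrev V2 := Fin 2 → ℝ

/-- Partial derivative in direction `i` of a scalar function on `ℝ³`. -/
def pd3 (i : Fin 3) (f : V3 → ℝ) (x : V3) : ℝ := fderiv ℝ f x (Pi.single i 1)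

/-- Partial derivative in direction `i` of a scalar function on `ℝ²`. -/
def pd2 (i : Fin 2) (f : V2 → ℝ) (x : V2) : ℝ := fderiv ℝ f x (Pi.single i 1)

/-- Squared euclidean norm of a vector field at a point. -/
def vnormSq (u : V3 → V3) (x : V3) : ℝ := ∑ i, (u x i) ^ 2

/-- Squared Frobenius norm of the gradient matrix of a vector field. -/
def gradSq (u : V3 → V3) (x : V3) : ℝ := ∑ i, ∑ j, (pd3 j (fun z => u z i) x) ^ 2

/-- Pointwise Frobenius norm `|∇u|`. -/
def gradNorm (u : V3 → V3) (x : V3) : ℝ := Real.sqrt (gradSq u x)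

/-- Pointwise inner product `∇u · ∇v` of two gradient matrices. -/
def gradInner (u v : V3 → V3) (x : V3) : ℝ :=
  ∑ i, ∑ j, pd3 j (fun z => u z i) x * pd3 j (fun z => v z i) x

/-- Divergence of a vector field. -/
def divg (u : V3 → V3) (x : V3) : ℝ := ∑ i, pd3 i (fun z => u z i) x

/-- The unit square `ω = (0,1)²`. -/
def omega2 : Set V2 := {x | 0 < x 0 ∧ x 0 < 1 ∧ 0 < x 1 ∧ x 1 < 1}

/-- Horizontal projection `x̂` of a point of `ℝ³`. -/
def hat (x : V3) : V2 := ![x 0, x 1]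

/-- The thin domain `Ω_ε = {(x̂,x₃) : x̂ ∈ ω, 0 < x₃ < εG(x̂/ε)}`. -/
def thinDom (ε : ℝ) (G : V2 → ℝ) : Set V3 :=
  {x | hat x ∈ omega2 ∧ 0 < x 2 ∧ x 2 < ε * G ![x 0 / ε, x 1 / ε]}

/-- The basic cell `Y* = {(ŷ,y₃) : ŷ ∈ (0,L₁)×(0,L₂), 0 < y₃ < G(ŷ)}`. -/
def Ystar (L1 L2 : ℝ) (G : V2 → ℝ) : Set V3 :=
  {y | 0 < y 0 ∧ y 0 < L1 ∧ 0 < y 1 ∧ y 1 < L2 ∧ 0 < y 2 ∧ y 2 < G ![y 0, y 1]}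

/-- `Y`-periodicity of `G` with periods `L₁, L₂`. -/
def Yper (L1 L2 : ℝ) (G : V2 → ℝ) : Prop :=
  ∀ (y : V2) (k : Fin 2 → ℤ), G (fun i => y i + (k i : ℝ) * ![L1, L2] i) = G y

/-- The `ε`-cell containing `x̂` is entirely included in `ω=(0,1)²` (that is, `x̂ ∈ ω^ε`). -/
def cellOK (ε L1 L2 : ℝ) (xh : V2) : Prop :=
  0 ≤ ⌊xh 0 / (ε * L1)⌋ ∧ 0 ≤ ⌊xh 1 / (ε * L2)⌋ ∧
    ε * L1 * ((⌊xh 0 / (ε * L1)⌋ : ℝ) + 1) ≤ 1 ∧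
    ε * L2 * ((⌊xh 1 / (ε * L2)⌋ : ℝ) + 1) ≤ 1

/-- The unfolding operator `T_ε(φ)(x̂,y) = φ(ε[x̂/ε]_L L + εŷ, εy₃)` on `ω^ε × Y*`, `0` on `Λ^ε × Y*`. -/
def Tunf (ε L1 L2 : ℝ) (φ : V3 → ℝ) (xh : V2) (y : V3) : ℝ :=
  if cellOK ε L1 L2 xh then
    φ ![ε * ((⌊xh 0 / (ε * L1)⌋ : ℝ) * L1 + y 0),
        ε * ((⌊xh 1 / (ε * L2)⌋ : ℝ) * L2 + y 1), ε * y 2]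
  else 0

/-- Union of the cells entirely included in `Ω_ε`. -/
def thinDom0 (ε L1 L2 : ℝ) (G : V2 → ℝ) : Set V3 :=
  {x ∈ thinDom ε G | cellOK ε L1 L2 (hat x)}

/-- The fixed-height domain `Ω = ω × (0, G₁)`. -/
def OmegaF (G1 : ℝ) : Set V3 := {x | hat x ∈ omega2 ∧ 0 < x 2 ∧ x 2 < G1}

/-- Matrix of partial derivatives in direction `i` of a vector field. -/
def pdV (i : Fin 3) (u : V3 → V3) (x : V3) : V3 := fun j => pd3 i (fun z => u z j) x

/-- Weak convergence in `L²(S)³` of a sequence of vector fields. -/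
def WeakL2V (S : Set V3) (fn : ℕ → V3 → V3) (f : V3 → V3) : Prop :=
  ∀ g : V3 → V3, (∀ i, MemLp (fun x => g x i) 2 (volume.restrict S)) →
    Tendsto (fun n => ∫ x in S, ∑ i, fn n x i * g x i) atTop
      (nhds (∫ x in S, ∑ i, f x i * g x i))


lemma pd3_of_nmem_tsupport {f : V3 → ℝ} {x : V3} (hx : x ∉ tsupport f) (i : Fin 3) :
    pd3 i f x = 0 := by
  have h : fderiv ℝ f x = 0 := by
    by_contra h
    exact hx (support_fderiv_subset ℝ (Function.mem_support.2 h))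
  simp [pd3, h]

lemma integral_sum_pd3_eq_zero (f : Fin 3 → V3 → ℝ)
    (hreg : ∀ i, ContDiff ℝ 1 (f i)) (hcs : ∀ i, HasCompactSupport (f i)) :
    ∫ x : V3, ∑ i, pd3 i (f i) x = 0 := by
  obtain ⟨R, hR⟩ : ∃ R : ℝ, ∀ i, tsupport (f i) ⊆ Metric.closedBall 0 R := by
    have h : ∀ i : Fin 3, ∃ R, tsupport (f i) ⊆ Metric.closedBall 0 R := fun i =>
      ((hcs i).isBounded).subset_closedBall 0
    choose Rs hRs using h
    refine ⟨max (Rs 0) (max (Rs 1) (Rs 2)), fun i =>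
      (hRs i).trans (Metric.closedBall_subset_closedBall ?_)⟩
    fin_cases i <;> simp [le_max_iff, le_refl]
  set M : ℝ := max R 0 + 1 with hM
  have hMpos : 0 < M := by positivity
  have hRM : R < M := by have h := le_max_left R 0; rw [hM]; linarith
  set a : Fin 3 → ℝ := fun _ => -M with ha
  set b : Fin 3 → ℝ := fun _ => M with hb
  have hle : a ≤ b := fun i => by simp [ha, hb]; linarith
  have hnm : ∀ (y : V3) (i : Fin 3), M ≤ |y i| → ∀ j, f j y = 0 := by
    intro y i hy j
    apply image_eq_zero_of_notMem_tsupport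
    intro hmem
    have h1 : |y i| ≤ ‖y‖ := by
      simpa using norm_le_pi_norm y i
    have h2 : ‖y‖ ≤ R := by simpa [Metric.mem_closedBall] using hR j hmem
    linarith
  have hcont : Continuous fun x : V3 => ∑ i : Fin 3, fderiv ℝ (f i) x (Pi.single i 1) :=
    continuous_finset_sum _ fun i _ =>
      ((hreg i).continuous_fderiv one_ne_zero).clm_apply continuous_const
  have hdivthm := MeasureTheory.integral_divergence_of_hasFDerivAt_off_countable' a b hle f
      (fun i x => fderiv ℝ (f i) x) ∅ Set.countable_empty
      (fun i => (hreg i).continuous.continuousOn)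
      (fun x _ i => ((hreg i).differentiable one_ne_zero x).hasFDerivAt)
      (ContinuousOn.integrableOn_compact isCompact_Icc hcont.continuousOn)
  have hfaces : (∑ i : Fin 3,
      ((∫ x in Icc (a ∘ Fin.succAbove i) (b ∘ Fin.succAbove i), f i (Fin.insertNth i (b i) x)) -
        ∫ x in Icc (a ∘ Fin.succAbove i) (b ∘ Fin.succAbove i), f i (Fin.insertNth i (a i) x))) = 0 := by
    apply Finset.sum_eq_zero
    intro i _
    have h1 : ∀ x : Fin 2 → ℝ, f i (Fin.insertNth i (b i) x) = 0 := by
      intro x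
      apply hnm _ i _ i
      simp [hb, abs_of_pos hMpos, Fin.insertNth_apply_same]
    have h2 : ∀ x : Fin 2 → ℝ, f i (Fin.insertNth i (a i) x) = 0 := by
      intro x
      apply hnm _ i _ i
      simp [ha, abs_of_pos hMpos, Fin.insertNth_apply_same]
    simp [h1, h2]
  have hset : (∫ x in Icc a b, ∑ i : Fin 3, fderiv ℝ (f i) x (Pi.single i 1))
      = ∫ x : V3, ∑ i : Fin 3, pd3 i (f i) x := by
    rw [setIntegral_eq_integral_of_forall_compl_eq_zero]
    · rfl
    · intro x hx
      have hex : ∃ i, ¬ (a i ≤ x i ∧ x i ≤ b i) := by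
        by_contra hcon
        push_neg at hcon
        exact hx ⟨fun i => (hcon i).1, fun i => (hcon i).2⟩
      obtain ⟨i, hi⟩ := hex
      have hMi : M ≤ |x i| := by
        simp only [ha, hb, not_and_or, not_le] at hi
        rcases hi with h | h
        · rw [abs_of_neg (by linarith)]; linarith
        · rw [abs_of_pos (by linarith)]; linarith
      apply Finset.sum_eq_zero
      intro j _
      have hnot : x ∉ tsupport (f j) := by
        intro hmem
        have h1 : |x i| ≤ ‖x‖ := by simpa using norm_le_pi_norm x i
        have h2 : ‖x‖ ≤ R := by simpa [Metric.mem_closedBall] using hR j hmem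
        linarith
      exact pd3_of_nmem_tsupport hnot j
  rw [← hset, hdivthm, hfaces]

/-- `hat` as a continuous linear map. -/
def hatL : V3 →L[ℝ] V2 :=
  ContinuousLinearMap.pi ![ContinuousLinearMap.proj 0, ContinuousLinearMap.proj 1]

lemma hat_eq_hatL (x : V3) : hat x = hatL x := by
  funext i
  fin_cases i <;>
    simp [hat, hatL, ContinuousLinearMap.pi_apply]

lemma hatL_single0 : hatL (Pi.single 0 (1:ℝ)) = (Pi.single 0 1 : V2) := by
  funext i
  fin_cases i <;>
    simp [hatL, ContinuousLinearMap.pi_apply, Pi.single_apply]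

lemma hatL_single1 : hatL (Pi.single 1 (1:ℝ)) = (Pi.single 1 1 : V2) := by
  funext i
  fin_cases i <;>
    simp [hatL, ContinuousLinearMap.pi_apply, Pi.single_apply]

lemma hatL_single2 : hatL (Pi.single 2 (1:ℝ)) = (0 : V2) := by
  funext i
  fin_cases i <;>
    simp [hatL, ContinuousLinearMap.pi_apply, Pi.single_apply]

lemma pd3_comp_hatL (φ : V2 → ℝ) (hφ : ContDiff ℝ (⊤ : ℕ∞) φ) (x : V3) (j : Fin 3) :
    pd3 j (fun z => φ (hatL z)) x = fderiv ℝ φ (hatL x) (hatL (Pi.single j 1)) := by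
  have h : fderiv ℝ (φ ∘ hatL) x = (fderiv ℝ φ (hatL x)).comp (hatL : V3 →L[ℝ] V2) := by
    rw [fderiv_comp x (hφ.differentiable (by simp) (hatL x)) hatL.differentiableAt,
      hatL.fderiv]
  show fderiv ℝ (φ ∘ hatL) x (Pi.single j 1) = _
  rw [h]; rfl

lemma mem_OmegaF_iff {G1 : ℝ} {x : V3} :
    x ∈ OmegaF G1 ↔ 0 < x 0 ∧ x 0 < 1 ∧ 0 < x 1 ∧ x 1 < 1 ∧ 0 < x 2 ∧ x 2 < G1 := by
  simp [OmegaF, omega2, hat]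
  tauto

lemma OmegaF_subset_Icc (G1 : ℝ) :
    OmegaF G1 ⊆ Icc (fun _ => -(max 1 G1)) (fun _ => max 1 G1) := by
  intro x hx
  rw [mem_OmegaF_iff] at hx
  obtain ⟨h1, h2, h3, h4, h5, h6⟩ := hx
  have hm : (1:ℝ) ≤ max 1 G1 := le_max_left _ _
  have hg : G1 ≤ max 1 G1 := le_max_right _ _
  refine ⟨fun i => ?_, fun i => ?_⟩ <;> fin_cases i
  · show -(1 ⊔ G1) ≤ x 0; linarith
  · show -(1 ⊔ G1) ≤ x 1; linarith
  · show -(1 ⊔ G1) ≤ x 2; linarith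
  · show x 0 ≤ 1 ⊔ G1; linarith
  · show x 1 ≤ 1 ⊔ G1; linarith
  · show x 2 ≤ 1 ⊔ G1; linarith

lemma measurableSet_OmegaF (G1 : ℝ) : MeasurableSet (OmegaF G1) := by
  have h : OmegaF G1 = (fun x : V3 => x 0) ⁻¹' Ioo 0 1 ∩ ((fun x : V3 => x 1) ⁻¹' Ioo 0 1)
      ∩ ((fun x : V3 => x 2) ⁻¹' Ioo 0 G1) := by
    ext x
    simp [mem_OmegaF_iff, Set.mem_Ioo]
    tauto
  rw [h]
  exact (((measurable_pi_apply 0) measurableSet_Ioo).inter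
    ((measurable_pi_apply 1) measurableSet_Ioo)).inter
    ((measurable_pi_apply 2) measurableSet_Ioo)

/-- the limit `U = (Û,0)` of the rescaled velocities satisfies
`div_{x̂}(∫₀^{G₁} Û dy₃) = 0` in `D'(ω)` and `(∫₀^{G₁} Û dy₃)·n = 0` on `∂ω`;
the trace condition is encoded by testing against smooth functions up to the boundary. -/
theorem limit_velocity_constraints
    (G1 : ℝ) (hG1 : 0 < G1)
    (εn : ℕ → ℝ) (hεpos : ∀ n, 0 < εn n) (hεto : Tendsto εn atTop (nhds 0))
    (Un : ℕ → V3 → V3)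
    (hreg : ∀ n, ContDiff ℝ 1 (Un n))
    (hsupp : ∀ n i, tsupport (fun x => Un n x i) ⊆ OmegaF G1)
    (hdiv : ∀ n, ∀ x ∈ OmegaF G1,
      εn n * pd3 0 (fun z => Un n z 0) x + εn n * pd3 1 (fun z => Un n z 1) x
        + pd3 2 (fun z => Un n z 2) x = 0)
    (U : V3 → V3)
    (hUmem : ∀ i, MemLp (fun x => U x i) 2 (volume.restrict (OmegaF G1)))
    (hUconv : WeakL2V (OmegaF G1) Un U) :
    -- div_{x̂}(∫₀^{G₁} Û dy₃) = 0 in D'(ω)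
    (∀ φ : V2 → ℝ, ContDiff ℝ (⊤ : ℕ∞) φ → tsupport φ ⊆ omega2 →
      ∫ x in OmegaF G1, (U x 0 * pd2 0 φ (hat x) + U x 1 * pd2 1 φ (hat x)) = 0)
    -- together with (∫₀^{G₁} Û dy₃)·n = 0 on ∂ω: test with all smooth φ
    ∧ (∀ φ : V2 → ℝ, ContDiff ℝ (⊤ : ℕ∞) φ →
      ∫ x in OmegaF G1, (U x 0 * pd2 0 φ (hat x) + U x 1 * pd2 1 φ (hat x)) = 0) := by
  have hmeas := measurableSet_OmegaF G1
  have hsubIcc := OmegaF_subset_Icc G1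
  have hfin : IsFiniteMeasure (volume.restrict (OmegaF G1)) := by
    constructor
    rw [Measure.restrict_apply_univ]
    exact lt_of_le_of_lt (measure_mono hsubIcc) isCompact_Icc.measure_lt_top
  have key : ∀ φ : V2 → ℝ, ContDiff ℝ (⊤ : ℕ∞) φ →
      ∫ x in OmegaF G1, (U x 0 * pd2 0 φ (hat x) + U x 1 * pd2 1 φ (hat x)) = 0 := by
    intro φ hφ
    set ψ : V3 → ℝ := fun x => φ (hatL x) with hψdef
    have hψ : ContDiff ℝ (⊤ : ℕ∞) ψ := hφ.comp hatL.contDiff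
    have hp0 : ∀ x : V3, pd3 0 ψ x = pd2 0 φ (hat x) := by
      intro x
      rw [hψdef, pd3_comp_hatL φ hφ x 0, hatL_single0, pd2, hat_eq_hatL]
    have hp1 : ∀ x : V3, pd3 1 ψ x = pd2 1 φ (hat x) := by
      intro x
      rw [hψdef, pd3_comp_hatL φ hφ x 1, hatL_single1, pd2, hat_eq_hatL]
    have hp2 : ∀ x : V3, pd3 2 ψ x = 0 := by
      intro x
      rw [hψdef, pd3_comp_hatL φ hφ x 2, hatL_single2, map_zero]
    have hKu : ∀ n i, HasCompactSupport fun z => Un n z i := fun n i =>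
      IsCompact.of_isClosed_subset isCompact_Icc (isClosed_tsupport _)
        ((hsupp n i).trans hsubIcc)
    have hzero : ∀ n, ∫ x in OmegaF G1,
        (Un n x 0 * pd2 0 φ (hat x) + Un n x 1 * pd2 1 φ (hat x)) = 0 := by
      intro n
      have hεne : εn n ≠ 0 := ne_of_gt (hεpos n)
      set c : Fin 3 → ℝ := fun i => if i = 2 then 1 else εn n with hc
      have hc0 : c 0 = εn n := by simp [hc]
      have hc1 : c 1 = εn n := by simp [hc]
      have hc2 : c 2 = 1 := by simp [hc]
      set f : Fin 3 → V3 → ℝ := fun i z => c i * Un n z i * ψ z with hfd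
      have hui : ∀ i : Fin 3, ContDiff ℝ 1 fun z => Un n z i := fun i =>
        contDiff_pi.1 (hreg n) i
      have hfreg : ∀ i, ContDiff ℝ 1 (f i) := fun i =>
        (contDiff_const.mul (hui i)).mul (hψ.of_le (by simp))
      have hfcs : ∀ i, HasCompactSupport (f i) := by
        intro i
        apply IsCompact.of_isClosed_subset (hKu n i) (isClosed_tsupport _)
        apply closure_mono
        intro z hz
        simp only [Function.mem_support, hfd] at hz ⊢
        intro h0
        apply hz
        rw [h0]
        ring
      have hdivfull : ∀ x : V3, εn n * pd3 0 (fun z => Un n z 0) x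
          + εn n * pd3 1 (fun z => Un n z 1) x + pd3 2 (fun z => Un n z 2) x = 0 := by
        intro x
        by_cases hx : x ∈ OmegaF G1
        · exact hdiv n x hx
        · rw [pd3_of_nmem_tsupport (fun h => hx (hsupp n 0 h)) 0,
            pd3_of_nmem_tsupport (fun h => hx (hsupp n 1 h)) 1,
            pd3_of_nmem_tsupport (fun h => hx (hsupp n 2 h)) 2]
          ring
      have hpt : ∀ x : V3, ∑ i, pd3 i (f i) x
          = εn n * (Un n x 0 * pd3 0 ψ x + Un n x 1 * pd3 1 ψ x) := by
        intro x
        have hψx : DifferentiableAt ℝ ψ x := hψ.differentiable (by simp) x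
        have hprod : ∀ i : Fin 3, pd3 i (f i) x
            = (c i * Un n x i) * pd3 i ψ x + ψ x * (c i * pd3 i (fun z => Un n z i) x) := by
          intro i
          have hA : DifferentiableAt ℝ (fun z => c i * Un n z i) x :=
            (differentiableAt_const _).mul ((hui i).differentiable one_ne_zero x)
          show fderiv ℝ (fun z => c i * Un n z i * ψ z) x (Pi.single i 1) = _
          rw [fderiv_fun_mul hA hψx, fderiv_const_mul ((hui i).differentiable one_ne_zero x) (c i)]
          simp [pd3]
        rw [Fin.sum_univ_three, hprod 0, hprod 1, hprod 2, hc0, hc1, hc2]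
        have h2 := hp2 x
        have hd := hdivfull x
        linear_combination ψ x * hd + Un n x 2 * h2
      have hint := integral_sum_pd3_eq_zero f hfreg hfcs
      simp only [hpt] at hint
      rw [integral_const_mul] at hint
      have hint2 : ∫ x : V3, (Un n x 0 * pd3 0 ψ x + Un n x 1 * pd3 1 ψ x) = 0 := by
        rcases mul_eq_zero.1 hint with h | h
        · exact absurd h hεne
        · exact h
      calc ∫ x in OmegaF G1, (Un n x 0 * pd2 0 φ (hat x) + Un n x 1 * pd2 1 φ (hat x))
          = ∫ x : V3, (Un n x 0 * pd2 0 φ (hat x) + Un n x 1 * pd2 1 φ (hat x)) := by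
            apply setIntegral_eq_integral_of_forall_compl_eq_zero
            intro x hx
            have h0 : Un n x 0 = 0 :=
              image_eq_zero_of_notMem_tsupport (f := fun z : V3 => Un n z 0) (fun h => hx (hsupp n 0 h))
            have h1 : Un n x 1 = 0 :=
              image_eq_zero_of_notMem_tsupport (f := fun z : V3 => Un n z 1) (fun h => hx (hsupp n 1 h))
            rw [h0, h1]
            ring
        _ = ∫ x : V3, (Un n x 0 * pd3 0 ψ x + Un n x 1 * pd3 1 ψ x) := by
            simp only [hp0, hp1]
        _ = 0 := hint2
    set g : V3 → V3 := fun x => ![pd2 0 φ (hat x), pd2 1 φ (hat x), 0] with hgdef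
    have hψc : ∀ j : Fin 3, Continuous fun x => pd3 j ψ x := fun j =>
      (hψ.continuous_fderiv (by simp)).clm_apply continuous_const
    have hgc : ∀ i : Fin 3, Continuous fun x => g x i := by
      intro i
      fin_cases i
      · have h : (fun x : V3 => g x 0) = fun x => pd3 0 ψ x := by
          funext x; simp [hgdef, ← hp0]
        show Continuous fun x => g x 0
        rw [h]; exact hψc 0
      · have h : (fun x : V3 => g x 1) = fun x => pd3 1 ψ x := by
          funext x; simp [hgdef, ← hp1]
        show Continuous fun x => g x 1
        rw [h]; exact hψc 1
      · have h : (fun x : V3 => g x 2) = fun _ => (0:ℝ) := by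
          funext x; simp [hgdef]
        show Continuous fun x => g x 2
        rw [h]; exact continuous_const
    have hgmem : ∀ i, MemLp (fun x => g x i) 2 (volume.restrict (OmegaF G1)) := by
      intro i
      obtain ⟨C, hC⟩ := isCompact_Icc.exists_bound_of_continuousOn (hgc i).continuousOn
      refine MemLp.of_bound (hgc i).aestronglyMeasurable C ?_
      rw [ae_restrict_iff' hmeas]
      exact ae_of_all _ fun x hx => hC x (hsubIcc hx)
    have hU := hUconv g hgmem
    have hexp : ∀ (v : V3 → V3) (x : V3), ∑ i, v x i * g x i
        = v x 0 * pd2 0 φ (hat x) + v x 1 * pd2 1 φ (hat x) := by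
      intro v x
      simp [hgdef, Fin.sum_univ_three]
    have hseq : (fun n => ∫ x in OmegaF G1, ∑ i, Un n x i * g x i) = fun _ => (0:ℝ) := by
      funext n
      simp only [hexp]
      exact hzero n
    rw [hseq] at hU
    have hlim : ∫ x in OmegaF G1, ∑ i, U x i * g x i = 0 :=
      tendsto_nhds_unique hU tendsto_const_nhds
    simp only [hexp] at hlim
    exact hlim
  exact ⟨fun φ hφ _ => key φ hφ, key⟩
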